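/- arXiv:1805.09115 — 2 statements merged into one kernel-verified Lean document; each statement's English description precedes it below -/
import Mathlib

section
/- If 0 < α < 1 and f = ₐI^α φ for some φ ∈ L¹(a,b), then ₐI^α (ᴿᴸₐD^α f)(t) = f(t) for almost every t ∈ (a,b). -/
open MeasureTheory Real

/-- Riemann–Liouville fractional integral of order `α` with base point `a`. -/
noncomputable def fracInt (a α : ℝ) (f : ℝ → ℝ) (t : ℝ) : ℝ :=
  (1 / Real.Gamma α) * ∫ τ in a..t, (t - τ) ^ (α - 1) * f τ

/-- Riemann–Liouville fractional derivative of order `α ∈ (0,1)` with base point `a`. -/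
noncomputable def rlDeriv (a α : ℝ) (f : ℝ → ℝ) (t : ℝ) : ℝ :=
  deriv (fracInt a (1 - α) f) t

section aux
open intervalIntegral Metric Filter Function


lemma realBeta {α : ℝ} (hα : 0 < α) (hα1 : α < 1) :
    ∫ u in (0:ℝ)..1, u ^ (α - 1) * (1 - u) ^ (-α) = Real.Gamma α * Real.Gamma (1 - α) := by
  have h := Complex.Gamma_mul_Gamma_eq_betaIntegral (s := (α:ℂ)) (t := ((1-α : ℝ):ℂ))
    (by simpa using hα) (by simpa using sub_pos.mpr hα1)
  have hsum : (α:ℂ) + ((1-α:ℝ):ℂ) = 1 := by push_cast; ring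
  rw [hsum, Complex.Gamma_one, one_mul] at h
  have key : Complex.betaIntegral (α:ℂ) ((1-α:ℝ):ℂ)
      = ((∫ u in (0:ℝ)..1, u ^ (α - 1) * (1 - u) ^ (-α) : ℝ) : ℂ) := by
    rw [Complex.betaIntegral, ← intervalIntegral.integral_ofReal]
    apply intervalIntegral.integral_congr
    intro x hx
    rw [Set.uIcc_of_le (by norm_num : (0:ℝ) ≤ 1)] at hx
    have hx0 : (0:ℝ) ≤ x := hx.1
    have hx1 : (0:ℝ) ≤ 1 - x := by linarith [hx.2]
    have e1 : ((x:ℂ)) ^ ((α:ℂ) - 1) = ((x ^ (α - 1) : ℝ) : ℂ) := by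
      rw [Complex.ofReal_cpow hx0]; norm_num
    have e2 : ((1:ℂ) - (x:ℂ)) ^ (((1-α:ℝ):ℂ) - 1) = (((1 - x) ^ (-α) : ℝ) : ℂ) := by
      rw [show ((1:ℂ) - (x:ℂ)) = (((1 - x : ℝ)):ℂ) by push_cast; ring,
        Complex.ofReal_cpow hx1]
      norm_num
    show (x:ℂ) ^ ((α:ℂ) - 1) * (1 - (x:ℂ)) ^ (((1-α:ℝ):ℂ) - 1) = _
    rw [e1, e2]; push_cast; ring
  rw [key, Complex.Gamma_ofReal, Complex.Gamma_ofReal, ← Complex.ofReal_mul] at h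
  exact_mod_cast h.symm


lemma kerInt {α : ℝ} (hα : 0 < α) (hα1 : α < 1) {s t : ℝ} (hst : s < t) :
    IntervalIntegrable (fun τ => (t - τ) ^ (-α) * (τ - s) ^ (α - 1)) volume s t := by
  set m := (s + t) / 2 with hm
  have hsm : s < m := by rw [hm]; linarith
  have hmt : m < t := by rw [hm]; linarith
  have h1 : IntervalIntegrable (fun τ => (t - τ) ^ (-α) * (τ - s) ^ (α - 1)) volume s m := by
    apply IntervalIntegrable.continuousOn_mul
    · have : IntervalIntegrable (fun x : ℝ => x ^ (α - 1)) volume (s - s) (m - s) :=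
        intervalIntegrable_rpow' (by linarith)
      simpa using this.comp_sub_right s
    · apply ContinuousOn.rpow_const (by fun_prop)
      intro x hx
      rw [Set.uIcc_of_le hsm.le] at hx
      left
      have := hx.2
      simp only [ne_eq, sub_ne_zero]
      intro h; rw [← h] at this; linarith
  have h2 : IntervalIntegrable (fun τ => (t - τ) ^ (-α) * (τ - s) ^ (α - 1)) volume m t := by
    apply IntervalIntegrable.mul_continuousOn
    · have : IntervalIntegrable (fun x : ℝ => x ^ (-α)) volume (t - m) (t - t) :=
        intervalIntegrable_rpow' (by linarith)
      simpa using this.comp_sub_left t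
    · apply ContinuousOn.rpow_const (by fun_prop)
      intro x hx
      rw [Set.uIcc_of_le hmt.le] at hx
      left
      have := hx.1
      simp only [ne_eq, sub_ne_zero]
      intro h; rw [h] at this; linarith
  exact h1.trans h2

lemma kerVal {α : ℝ} (hα : 0 < α) (hα1 : α < 1) {s t : ℝ} (hst : s < t) :
    ∫ τ in s..t, (t - τ) ^ (-α) * (τ - s) ^ (α - 1) = Real.Gamma α * Real.Gamma (1 - α) := by
  set c := t - s with hc
  have hc0 : 0 < c := by simp [hc, hst]
  set K : ℝ → ℝ := fun τ => (t - τ) ^ (-α) * (τ - s) ^ (α - 1) with hK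
  have e1 : ∫ τ in s..t, K τ = ∫ x in (0:ℝ)..c, K (x + s) := by
    rw [intervalIntegral.integral_comp_add_right K s]
    norm_num [hc]
  have e2 : ∫ x in (0:ℝ)..c, K (x + s) = c • ∫ u in (0:ℝ)..1, K (u * c + s) := by
    rw [intervalIntegral.integral_comp_mul_right (fun x => K (x + s)) hc0.ne']
    rw [smul_smul, mul_inv_cancel₀ hc0.ne', one_smul, zero_mul, one_mul]
  have e3 : ∀ u ∈ Set.uIcc (0:ℝ) 1, K (u * c + s) = c⁻¹ * (u ^ (α - 1) * (1 - u) ^ (-α)) := by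
    intro u hu
    rw [Set.uIcc_of_le zero_le_one] at hu
    have hu0 : 0 ≤ u := hu.1
    have hu1 : 0 ≤ 1 - u := by linarith [hu.2]
    have ht' : t - (u * c + s) = c * (1 - u) := by rw [hc]; ring
    have hs' : u * c + s - s = c * u := by ring
    rw [hK]
    simp only [ht', hs']
    rw [Real.mul_rpow hc0.le hu1, Real.mul_rpow hc0.le hu0]
    have : c ^ (-α) * (1 - u) ^ (-α) * (c ^ (α - 1) * u ^ (α - 1))
        = (c ^ (-α) * c ^ (α - 1)) * (u ^ (α - 1) * (1 - u) ^ (-α)) := by ring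
    rw [this, ← Real.rpow_add hc0, show -α + (α - 1) = -1 by ring, Real.rpow_neg_one]
  rw [e1, e2, intervalIntegral.integral_congr e3, intervalIntegral.integral_const_mul,
    realBeta hα hα1, smul_eq_mul]
  field_simp


lemma swapLemma {α a t : ℝ} (hα : 0 < α) (hα1 : α < 1) (hat : a < t)
    {ψ : ℝ → ℝ} (hmψ : Measurable ψ) (hi : Integrable ψ (volume : Measure ℝ)) :
    ∫ τ in Set.Ioc a t, (t - τ) ^ (-α) * ∫ s in Set.Ioc a τ, (τ - s) ^ (α - 1) * ψ s
      = Real.Gamma α * Real.Gamma (1 - α) * ∫ s in Set.Ioc a t, ψ s := by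
  set H : ℝ → ℝ → ℝ := fun τ s =>
    (Set.Ioc a t).indicator
      (fun τ' => (t - τ') ^ (-α) *
        (Set.Ioc a τ').indicator (fun s' => (τ' - s') ^ (α - 1) * ψ s') s) τ with hH
  -- slice descriptions
  have slice : ∀ s : ℝ, a < s → s < t → (fun τ => H τ s)
      = (Set.Icc s t).indicator (fun τ => ((t - τ) ^ (-α) * (τ - s) ^ (α - 1)) * ψ s) := by
    intro s has hst
    funext τ
    by_cases hτ : τ ∈ Set.Icc s t
    · have h1 : τ ∈ Set.Ioc a t := ⟨lt_of_lt_of_le has hτ.1, hτ.2⟩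
      have h2 : s ∈ Set.Ioc a τ := ⟨has, hτ.1⟩
      simp only [hH, Set.indicator_of_mem h1, Set.indicator_of_mem h2,
        Set.indicator_of_mem hτ]
      ring
    · simp only [Set.indicator_of_notMem hτ, hH]
      by_cases h1 : τ ∈ Set.Ioc a t
      · have h2 : s ∉ Set.Ioc a τ := by
          intro h2
          exact hτ ⟨h2.2, h1.2⟩
        simp [Set.indicator_of_mem h1, Set.indicator_of_notMem h2]
      · simp [Set.indicator_of_notMem h1]
  have slice0 : ∀ s : ℝ, s ≤ a ∨ t < s → (fun τ => H τ s) = 0 := by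
    intro s hs
    funext τ
    simp only [hH]
    by_cases h1 : τ ∈ Set.Ioc a t
    · have h2 : s ∉ Set.Ioc a τ := by
        rintro ⟨h3, h4⟩
        rcases hs with h | h
        · exact absurd h3 (not_lt.mpr h)
        · exact absurd (h4.trans h1.2) (not_le.mpr h)
      simp [Set.indicator_of_mem h1, Set.indicator_of_notMem h2]
    · simp [Set.indicator_of_notMem h1]
  have sliceInt0 : ∀ s : ℝ, s ≤ a ∨ t < s → ∫ τ, H τ s = 0 := by
    intro s hs
    rw [show (fun τ => H τ s) = 0 from slice0 s hs]
    simp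
  have sliceAbsInt0 : ∀ s : ℝ, s ≤ a ∨ t < s → ∫ τ, ‖H τ s‖ = 0 := by
    intro s hs
    have h0 := slice0 s hs
    have : (fun τ => ‖H τ s‖) = fun _ => ‖(0:ℝ)‖ := by
      funext τ; rw [show H τ s = 0 from congrFun h0 τ]
    rw [this]
    simp
  -- measurability of uncurried H
  have hmeas : AEStronglyMeasurable (uncurry H) ((volume : Measure ℝ).prod volume) := by
    have heq : uncurry H = Set.indicator
        ((Set.Ioc a t ×ˢ (Set.univ : Set ℝ)) ∩ {q : ℝ × ℝ | a < q.2 ∧ q.2 ≤ q.1})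
        (fun q => (t - q.1) ^ (-α) * ((q.1 - q.2) ^ (α - 1) * ψ q.2)) := by
      funext p
      rcases p with ⟨τ, s⟩
      simp only [uncurry, hH, Set.indicator_apply, Set.mem_inter_iff, Set.mem_prod,
        Set.mem_univ, and_true, Set.mem_setOf_eq, Set.mem_Ioc]
      by_cases h1 : a < τ ∧ τ ≤ t <;> by_cases h2 : a < s ∧ s ≤ τ <;>
        simp [h1, h2]
    rw [heq]
    apply Measurable.aestronglyMeasurable
    apply Measurable.indicator
    · exact ((measurable_const.sub measurable_fst).pow measurable_const).mul
        (((measurable_fst.sub measurable_snd).pow measurable_const).mul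
          (hmψ.comp measurable_snd))
    · exact ((measurableSet_Ioc.prod MeasurableSet.univ)).inter
        ((measurableSet_lt measurable_const measurable_snd).inter
          (measurableSet_le measurable_snd measurable_fst))
  -- value of the τ-integral of the slices
  have sliceInt : ∀ s : ℝ, a < s → s < t →
      ∫ τ, H τ s = Real.Gamma α * Real.Gamma (1 - α) * ψ s := by
    intro s has hst
    rw [show (fun τ => H τ s) = _ from slice s has hst,
      MeasureTheory.integral_indicator measurableSet_Icc, integral_Icc_eq_integral_Ioc,
      ← intervalIntegral.integral_of_le hst.le, intervalIntegral.integral_mul_const,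
      kerVal hα hα1 hst]
  have sliceAbs : ∀ s : ℝ, a < s → s < t →
      (fun τ => ‖H τ s‖)
        = (Set.Icc s t).indicator (fun τ => ((t - τ) ^ (-α) * (τ - s) ^ (α - 1)) * |ψ s|) := by
    intro s has hst
    have hs1 := slice s has hst
    funext τ
    rw [show H τ s = _ from congrFun hs1 τ]
    by_cases hτ : τ ∈ Set.Icc s t
    · simp only [Set.indicator_of_mem hτ, Real.norm_eq_abs, abs_mul]
      rw [abs_of_nonneg (Real.rpow_nonneg (by linarith [hτ.2]) _),
        abs_of_nonneg (Real.rpow_nonneg (by linarith [hτ.1]) _)]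
    · simp [Set.indicator_of_notMem hτ]
  have sliceAbsInt : ∀ s : ℝ, a < s → s < t →
      ∫ τ, ‖H τ s‖ = Real.Gamma α * Real.Gamma (1 - α) * |ψ s| := by
    intro s has hst
    rw [show (fun τ => ‖H τ s‖) = _ from sliceAbs s has hst,
      MeasureTheory.integral_indicator measurableSet_Icc, integral_Icc_eq_integral_Ioc,
      ← intervalIntegral.integral_of_le hst.le, intervalIntegral.integral_mul_const,
      kerVal hα hα1 hst]
  -- integrability of uncurried H
  have hker : ∀ s : ℝ, a < s → s < t →
      Integrable ((Set.Icc s t).indicator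
        (fun τ => ((t - τ) ^ (-α) * (τ - s) ^ (α - 1)) * ψ s)) volume := by
    intro s has hst
    apply (IntegrableOn.integrable_indicator · measurableSet_Icc)
    rw [IntegrableOn, Measure.restrict_congr_set Ioc_ae_eq_Icc.symm]
    exact ((kerInt hα hα1 hst).1).mul_const _
  have hne : ∀ᵐ s : ℝ ∂(volume : Measure ℝ), s ≠ t := by
    refine ae_iff.mpr ?_
    simp only [ne_eq, not_not, Set.setOf_eq_eq_singleton, measure_singleton]
  have hint : Integrable (uncurry H) ((volume : Measure ℝ).prod volume) := by
    rw [MeasureTheory.integrable_prod_iff' hmeas]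
    constructor
    · filter_upwards [hne] with s hs
      show Integrable (fun τ => H τ s) volume
      rcases lt_or_ge a s with has | has
      · rcases lt_or_ge s t with hst | hst
        · rw [show (fun τ => H τ s) = _ from slice s has hst]
          exact hker s has hst
        · have : t < s := lt_of_le_of_ne hst (Ne.symm hs)
          rw [show (fun τ => H τ s) = 0 from slice0 s (Or.inr this)]
          exact integrable_zero _ _ _
      · rw [show (fun τ => H τ s) = 0 from slice0 s (Or.inl has)]
        exact integrable_zero _ _ _
    · apply Integrable.congr ((hi.abs.const_mul
        (Real.Gamma α * Real.Gamma (1 - α))).indicator measurableSet_Ioo (s := Set.Ioo a t))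
      filter_upwards [hne] with s hs
      show _ = ∫ τ, ‖H τ s‖
      rcases lt_or_ge a s with has | has
      · rcases lt_or_ge s t with hst | hst
        · rw [Set.indicator_of_mem (Set.mem_Ioo.mpr ⟨has, hst⟩)]
          exact (sliceAbsInt s has hst).symm
        · have hts : t < s := lt_of_le_of_ne hst (Ne.symm hs)
          rw [Set.indicator_of_notMem (by simp [Set.mem_Ioo, not_and, hts.not_gt, has]),
            sliceAbsInt0 s (Or.inr hts)]
      · rw [Set.indicator_of_notMem (by simp [Set.mem_Ioo, has.not_gt]),
          sliceAbsInt0 s (Or.inl has)]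
  -- now swap
  have hLHS : ∫ τ in Set.Ioc a t, (t - τ) ^ (-α) * ∫ s in Set.Ioc a τ, (τ - s) ^ (α - 1) * ψ s
      = ∫ τ, ∫ s, H τ s := by
    rw [← MeasureTheory.integral_indicator measurableSet_Ioc]
    congr 1
    funext τ
    by_cases hτ : τ ∈ Set.Ioc a t
    · rw [Set.indicator_of_mem hτ]
      simp only [hH, Set.indicator_of_mem hτ]
      rw [MeasureTheory.integral_const_mul, MeasureTheory.integral_indicator measurableSet_Ioc]
    · rw [Set.indicator_of_notMem hτ]
      simp only [hH, Set.indicator_of_notMem hτ]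
      simp
  have hRHS : ∫ s, ∫ τ, H τ s
      = Real.Gamma α * Real.Gamma (1 - α) * ∫ s in Set.Ioc a t, ψ s := by
    have : (fun s => ∫ τ, H τ s)
        =ᵐ[volume] (Set.Ioo a t).indicator
          (fun s => Real.Gamma α * Real.Gamma (1 - α) * ψ s) := by
      filter_upwards [hne] with s hs
      rcases lt_or_ge a s with has | has
      · rcases lt_or_ge s t with hst | hst
        · rw [Set.indicator_of_mem (Set.mem_Ioo.mpr ⟨has, hst⟩)]
          exact sliceInt s has hst
        · have hts : t < s := lt_of_le_of_ne hst (Ne.symm hs)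
          rw [Set.indicator_of_notMem (by simp [Set.mem_Ioo, not_and, hts.not_gt, has]),
            sliceInt0 s (Or.inr hts)]
      · rw [Set.indicator_of_notMem (by simp [Set.mem_Ioo, has.not_gt]),
          sliceInt0 s (Or.inl has)]
    rw [integral_congr_ae this, MeasureTheory.integral_indicator measurableSet_Ioo,
      MeasureTheory.integral_const_mul, ← integral_Ioc_eq_integral_Ioo]
  rw [hLHS, integral_integral_swap hint, hRHS]


lemma aeDerivIntegral {ψ : ℝ → ℝ} (hi : Integrable ψ (volume : Measure ℝ)) (a : ℝ) :
    ∀ᵐ x : ℝ ∂volume, HasDerivAt (fun u => ∫ s in a..u, ψ s) (ψ x) x := by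
  filter_upwards [IsUnifLocDoublingMeasure.ae_tendsto_average_norm_sub (volume : Measure ℝ)
    hi.locallyIntegrable 1] with x hx
  set F : ℝ → ℝ := fun u => ∫ s in a..u, ψ s with hF
  have havg : Tendsto (fun y : ℝ => ⨍ z in closedBall x |y - x|, ‖ψ z - ψ x‖)
      (nhdsWithin x {x}ᶜ) (nhds 0) := by
    apply hx (fun _ => x) (fun y => |y - x|)
    · rw [tendsto_nhdsWithin_iff]
      constructor
      · have : Tendsto (fun y : ℝ => |y - x|) (nhds x) (nhds |x - x|) := by
          apply Continuous.tendsto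
          continuity
        simpa using this.mono_left nhdsWithin_le_nhds
      · filter_upwards [self_mem_nhdsWithin] with y hy
        have : y - x ≠ 0 := sub_ne_zero.mpr hy
        exact abs_pos.mpr this
    · filter_upwards with y
      simpa [Metric.mem_closedBall, dist_self] using
        mul_nonneg (by norm_num) (abs_nonneg (y - x))
  have key : ∀ y : ℝ, y ≠ x →
      ‖slope F x y - ψ x‖ ≤ 2 * ⨍ z in closedBall x |y - x|, ‖ψ z - ψ x‖ := by
    intro y hy
    have hyx : y - x ≠ 0 := sub_ne_zero.mpr hy
    have hFd : F y - F x = ∫ s in x..y, ψ s := by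
      rw [hF]
      have := intervalIntegral.integral_add_adjacent_intervals
        (hi.intervalIntegrable (a := a) (b := x)) (hi.intervalIntegrable (a := x) (b := y))
      linarith [this]
    have hconst : ∫ s in x..y, (fun _ : ℝ => ψ x) s = (y - x) * ψ x := by
      simp [smul_eq_mul]
    have hnum : F y - F x - (y - x) * ψ x = ∫ s in x..y, (ψ s - ψ x) := by
      rw [intervalIntegral.integral_sub (hi.intervalIntegrable (a := x) (b := y))
        (intervalIntegrable_const), hFd]
      simp [smul_eq_mul]
    have hslope : slope F x y - ψ x = (∫ s in x..y, (ψ s - ψ x)) / (y - x) := by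
      rw [slope_def_field, ← hnum]
      field_simp
    have hball : Set.uIoc x y ⊆ closedBall x |y - x| := by
      have h1 : Set.uIcc x y ⊆ closedBall x |y - x| := by
        have hcb : (closedBall x |y - x|).OrdConnected := by
          rw [Real.closedBall_eq_Icc]; exact Set.ordConnected_Icc
        exact hcb.uIcc_subset (mem_closedBall_self (abs_nonneg _))
          (by simp [Metric.mem_closedBall, Real.dist_eq])
      exact fun z hz => h1 (Set.Ioc_subset_Icc_self hz)
    have hIcb : IntegrableOn (fun z => ‖ψ z - ψ x‖) (closedBall x |y - x|) volume := by
      apply Integrable.norm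
      exact hi.integrableOn.sub (integrableOn_const measure_closedBall_lt_top.ne)
    have hbd : ‖∫ s in x..y, (ψ s - ψ x)‖ ≤ ∫ z in closedBall x |y - x|, ‖ψ z - ψ x‖ := by
      refine (intervalIntegral.norm_integral_le_integral_norm_uIoc).trans ?_
      apply setIntegral_mono_set hIcb
      · filter_upwards with z using norm_nonneg _
      · exact HasSubset.Subset.eventuallyLE hball
    have hvol : (volume (closedBall x |y - x|)).toReal = 2 * |y - x| := by
      rw [Real.volume_closedBall, ENNReal.toReal_ofReal (by positivity)]
    have havg_eq : ∫ z in closedBall x |y - x|, ‖ψ z - ψ x‖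
        = (2 * |y - x|) * ⨍ z in closedBall x |y - x|, ‖ψ z - ψ x‖ := by
      rw [setAverage_eq, smul_eq_mul, measureReal_def, hvol, ← mul_assoc,
        mul_inv_cancel₀ (by positivity), one_mul]
    rw [hslope]
    rw [norm_div, Real.norm_eq_abs (y - x)]
    rw [div_le_iff₀ (abs_pos.mpr hyx)]
    calc ‖∫ s in x..y, (ψ s - ψ x)‖
        ≤ ∫ z in closedBall x |y - x|, ‖ψ z - ψ x‖ := hbd
      _ = (2 * |y - x|) * ⨍ z in closedBall x |y - x|, ‖ψ z - ψ x‖ := havg_eq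
      _ = 2 * (⨍ z in closedBall x |y - x|, ‖ψ z - ψ x‖) * |y - x| := by ring
  rw [hasDerivAt_iff_tendsto_slope]
  rw [tendsto_iff_norm_sub_tendsto_zero]
  apply squeeze_zero' (by filter_upwards with y using norm_nonneg _)
    (by filter_upwards [self_mem_nhdsWithin] with y hy using key y hy)
  simpa using havg.const_mul 2

end aux

theorem rl_int_left_inverse_on_image (a b α : ℝ) (hab : a < b) (hα : 0 < α) (hα1 : α < 1)
    (f φ : ℝ → ℝ) (hφ : IntegrableOn φ (Set.Ioo a b))
    (hfφ : ∀ t ∈ Set.Ioo a b, f t = fracInt a α φ t) :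
    ∀ᵐ t ∂(volume.restrict (Set.Ioo a b)),
      fracInt a α (rlDeriv a α f) t = f t := by
  have hΓα : 0 < Real.Gamma α := Real.Gamma_pos_of_pos hα
  have hΓβ : 0 < Real.Gamma (1 - α) := Real.Gamma_pos_of_pos (by linarith)
  have hind : Integrable ((Set.Ioo a b).indicator φ) (volume : Measure ℝ) :=
    hφ.integrable_indicator measurableSet_Ioo
  set ψ : ℝ → ℝ := hind.aestronglyMeasurable.mk _ with hψdef
  have hψm : Measurable ψ := hind.aestronglyMeasurable.stronglyMeasurable_mk.measurable
  have hae : (Set.Ioo a b).indicator φ =ᵐ[volume] ψ := hind.aestronglyMeasurable.ae_eq_mk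
  have hiψ : Integrable ψ (volume : Measure ℝ) := hind.congr hae
  set F : ℝ → ℝ := fun u => ∫ s in a..u, ψ s with hFdef
  -- rewrite the inner fractional integral of φ using ψ
  have hinner : ∀ τ ∈ Set.Ioo a b, fracInt a α φ τ
      = (1 / Real.Gamma α) * ∫ s in Set.Ioc a τ, (τ - s) ^ (α - 1) * ψ s := by
    intro τ hτ
    rw [fracInt, intervalIntegral.integral_of_le hτ.1.le]
    congr 1
    apply setIntegral_congr_ae measurableSet_Ioc
    filter_upwards [hae] with s hs hsmem
    rw [← hs, Set.indicator_of_mem (Set.mem_Ioo.mpr ⟨hsmem.1, lt_of_le_of_lt hsmem.2 hτ.2⟩)]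
  -- semigroup: ₐI^{1-α} f = ∫ₐ ψ on (a,b)
  have hkey : ∀ t ∈ Set.Ioo a b, fracInt a (1 - α) f t = F t := by
    intro t ht
    rw [fracInt, intervalIntegral.integral_of_le ht.1.le]
    have hcong : ∫ τ in Set.Ioc a t, (t - τ) ^ (1 - α - 1) * f τ
        = ∫ τ in Set.Ioc a t, (1 / Real.Gamma α) *
            ((t - τ) ^ (-α) * ∫ s in Set.Ioc a τ, (τ - s) ^ (α - 1) * ψ s) := by
      rw [MeasureTheory.integral_Ioc_eq_integral_Ioo,
        MeasureTheory.integral_Ioc_eq_integral_Ioo]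
      apply setIntegral_congr_fun measurableSet_Ioo
      intro τ hτ
      have hτab : τ ∈ Set.Ioo a b := ⟨hτ.1, hτ.2.trans ht.2⟩
      dsimp only
      rw [hfφ τ hτab, hinner τ hτab, show (1 : ℝ) - α - 1 = -α from by ring]
      ring
    rw [hcong, MeasureTheory.integral_const_mul, swapLemma hα hα1 ht.1 hψm hiψ]
    show _ = ∫ s in a..t, ψ s
    rw [intervalIntegral.integral_of_le ht.1.le]
    field_simp
  -- the fractional derivative equals ψ a.e.
  have hDψ : ∀ᵐ x : ℝ ∂volume, x ∈ Set.Ioo a b → rlDeriv a α f x = ψ x := by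
    filter_upwards [aeDerivIntegral hiψ a] with x hdx hx
    rw [rlDeriv]
    have hloc : fracInt a (1 - α) f =ᶠ[nhds x] F := by
      filter_upwards [Ioo_mem_nhds hx.1 hx.2] with u hu using hkey u hu
    rw [hloc.deriv_eq, hdx.deriv]
  -- conclude
  filter_upwards [ae_restrict_mem measurableSet_Ioo] with t ht
  rw [hfφ t ht, fracInt, fracInt,
    intervalIntegral.integral_of_le ht.1.le, intervalIntegral.integral_of_le ht.1.le]
  congr 1
  rw [MeasureTheory.integral_Ioc_eq_integral_Ioo, MeasureTheory.integral_Ioc_eq_integral_Ioo]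
  apply setIntegral_congr_ae measurableSet_Ioo
  filter_upwards [hDψ, hae] with τ hτ1 hτ2 hmem
  have hτb : τ ∈ Set.Ioo a b := ⟨hmem.1, hmem.2.trans ht.2⟩
  rw [hτ1 hτb, ← hτ2, Set.indicator_of_mem hτb]
end

section
/- If f : [a,b] → ℝ is continuous, then for each t ∈ (a,b], the Riemann–Liouville fractional integral (ₐI^α f)(t) converges to f(t) as α → 0⁺. -/
open MeasureTheory Real Filter

private lemma rpow_int_eq {α : ℝ} (hα : 0 < α) (c d t : ℝ) :
    ∫ τ in c..d, (t - τ) ^ (α - 1) = ((t - c) ^ α - (t - d) ^ α) / α := by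
  rw [intervalIntegral.integral_comp_sub_left (fun x => x ^ (α - 1)) t,
    integral_rpow (Or.inl (by linarith))]
  have h : α - 1 + 1 = α := by ring
  rw [h]

private lemma integrable_aux {α : ℝ} (hα : 0 < α) {c t : ℝ} (g : ℝ → ℝ)
    (hg : ContinuousOn g (Set.uIcc c t)) :
    IntervalIntegrable (fun τ => (t - τ) ^ (α - 1) * g τ) volume c t := by
  have h1 : IntervalIntegrable (fun x : ℝ => x ^ (α - 1)) volume (t - t) (t - c) :=
    intervalIntegral.intervalIntegrable_rpow' (by linarith)
  have h2 := (h1.comp_sub_left t).symm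
  simp only [sub_sub_cancel, sub_self, sub_zero] at h2
  exact h2.mul_continuousOn hg

theorem fracInt_tendsto_of_order_tendsto_zero (a b : ℝ) (hab : a < b)
    (f : ℝ → ℝ) (hf : ContinuousOn f (Set.Icc a b)) :
    ∀ t ∈ Set.Ioc a b,
      Tendsto (fun α => fracInt a α f t) (nhdsWithin 0 (Set.Ioi (0:ℝ))) (nhds (f t)) := by
  rintro t ⟨hat, htb⟩
  have htIcc : t ∈ Set.Icc a b := ⟨hat.le, htb⟩
  obtain ⟨M0, hM0⟩ := isCompact_Icc.exists_bound_of_continuousOn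
    (hf.sub (continuousOn_const (c := f t)))
  set M : ℝ := max M0 0 with hMdef
  have hMnn : 0 ≤ M := le_max_right _ _
  have hM : ∀ x ∈ Set.Icc a b, |f x - f t| ≤ M := fun x hx =>
    le_trans (hM0 x hx) (le_max_left _ _)
  rw [Metric.tendsto_nhds]
  intro ε hε
  have hct : ContinuousWithinAt f (Set.Icc a b) t := hf t htIcc
  rw [Metric.continuousWithinAt_iff] at hct
  obtain ⟨δ₀, hδ₀, hδ⟩ := hct (ε / 3) (by positivity)
  set δ : ℝ := min (δ₀ / 2) (t - a) with hδdef
  have hδpos : 0 < δ := lt_min (by linarith) (by linarith)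
  have hδle : δ ≤ t - a := min_le_right _ _
  have hnear : ∀ τ ∈ Set.Icc (t - δ) t, |f τ - f t| ≤ ε / 3 := by
    intro τ hτ
    have hτab : τ ∈ Set.Icc a b := ⟨by linarith [hτ.1], le_trans hτ.2 htb⟩
    have hdist : dist τ t < δ₀ := by
      rw [Real.dist_eq, abs_sub_comm, abs_of_nonneg (by linarith [hτ.2])]
      have h1 := hτ.1
      have h2 : δ ≤ δ₀ / 2 := min_le_left _ _
      linarith
    have := hδ hτab hdist
    rw [Real.dist_eq] at this
    linarith
  set B : ℝ → ℝ := fun α =>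
    (2 * M * ((t - a) ^ α - δ ^ α) + ε / 3 * δ ^ α) / Real.Gamma (α + 1)
      + |f t| * |(t - a) ^ α / Real.Gamma (α + 1) - 1| with hBdef
  have hta : (0:ℝ) < t - a := by linarith
  have hGcont : Tendsto (fun α : ℝ => Real.Gamma (α + 1)) (nhds 0) (nhds 1) := by
    have h1 : ContinuousAt Real.Gamma ((0:ℝ) + 1) :=
      (Real.differentiableAt_Gamma (fun m => by
        have h0 : (0:ℝ) ≤ m := Nat.cast_nonneg m
        intro h; linarith)).continuousAt
    have h2 : ContinuousAt (fun α : ℝ => Real.Gamma (α + 1)) 0 :=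
      ContinuousAt.comp (g := Real.Gamma) (f := fun α : ℝ => α + 1) (x := 0) h1
        ((continuous_add_right (1:ℝ)).continuousAt)
    have h3 := h2.tendsto
    simpa [Real.Gamma_one] using h3
  have hrpow : ∀ c : ℝ, 0 < c → Tendsto (fun α : ℝ => c ^ α) (nhds 0) (nhds 1) := by
    intro c hc
    have := (Real.continuousAt_const_rpow (a := c) (b := 0) hc.ne').tendsto
    simpa [Real.rpow_zero] using this
  have hBlim : Tendsto B (nhdsWithin 0 (Set.Ioi (0:ℝ))) (nhds (ε / 3)) := by
    have h1 : Tendsto B (nhds 0) (nhds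
        ((2 * M * (1 - 1) + ε / 3 * 1) / 1 + |f t| * |1 / 1 - 1|)) := by
      refine Tendsto.add (Tendsto.div (Tendsto.add
        (tendsto_const_nhds.mul ((hrpow _ hta).sub (hrpow _ hδpos)))
        (tendsto_const_nhds.mul (hrpow _ hδpos))) hGcont one_ne_zero)
        (tendsto_const_nhds.mul (Tendsto.abs
          (((hrpow _ hta).div hGcont one_ne_zero).sub tendsto_const_nhds)))
    have : (2 * M * (1 - 1) + ε / 3 * 1) / 1 + |f t| * |1 / 1 - 1| = ε / 3 := by norm_num
    rw [this] at h1
    exact h1.mono_left nhdsWithin_le_nhds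
  have hBev : ∀ᶠ α in nhdsWithin 0 (Set.Ioi (0:ℝ)), B α < ε :=
    hBlim.eventually_lt_const (by linarith)
  have hineq : ∀ᶠ α in nhdsWithin 0 (Set.Ioi (0:ℝ)),
      |fracInt a α f t - f t| ≤ B α := by
    filter_upwards [self_mem_nhdsWithin] with α hα
    replace hα : 0 < α := hα
    have hΓ : 0 < Real.Gamma α := Real.Gamma_pos_of_pos hα
    have hG1 : Real.Gamma (α + 1) = α * Real.Gamma α := Real.Gamma_add_one hα.ne'
    have hΓ1 : 0 < Real.Gamma (α + 1) := Real.Gamma_pos_of_pos (by linarith)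
    have huIcc : Set.uIcc a t ⊆ Set.Icc a b := by
      rw [Set.uIcc_of_le hat.le]; exact Set.Icc_subset_Icc le_rfl htb
    have hint_d : IntervalIntegrable (fun τ => (t - τ) ^ (α - 1) * (f τ - f t)) volume a t :=
      integrable_aux hα _ ((hf.mono huIcc).sub continuousOn_const)
    have hint_c : IntervalIntegrable (fun τ => (t - τ) ^ (α - 1) * f t) volume a t :=
      integrable_aux hα _ continuousOn_const
    have hint_M : IntervalIntegrable (fun τ => (t - τ) ^ (α - 1) * (2 * M)) volume a t :=
      integrable_aux hα _ continuousOn_const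
    have h1 : a ≤ t - δ := by linarith
    have h2 : t - δ ≤ t := by linarith
    have hsub1 : Set.uIcc a (t - δ) ⊆ Set.uIcc a t := by
      rw [Set.uIcc_of_le h1, Set.uIcc_of_le (le_trans h1 h2)]
      exact Set.Icc_subset_Icc le_rfl h2
    have hsub2 : Set.uIcc (t - δ) t ⊆ Set.uIcc a t := by
      rw [Set.uIcc_of_le h2, Set.uIcc_of_le (le_trans h1 h2)]
      exact Set.Icc_subset_Icc h1 le_rfl
    have hI1int := hint_d.mono_set hsub1
    have hI2int := hint_d.mono_set hsub2
    have hIadd := intervalIntegral.integral_add_adjacent_intervals hI1int hI2int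
    have hsplit : (∫ τ in a..t, (t - τ) ^ (α - 1) * f τ)
        = (∫ τ in a..t, (t - τ) ^ (α - 1) * (f τ - f t))
          + (∫ τ in a..t, (t - τ) ^ (α - 1) * f t) := by
      rw [← intervalIntegral.integral_add hint_d hint_c]
      congr 1; ext τ; ring
    have hconst : (∫ τ in a..t, (t - τ) ^ (α - 1) * f t) = (t - a) ^ α / α * f t := by
      rw [intervalIntegral.integral_mul_const, rpow_int_eq hα]
      rw [sub_self, Real.zero_rpow hα.ne', sub_zero]
    -- bound on the far part
    have hbound1 : |∫ τ in a..(t - δ), (t - τ) ^ (α - 1) * (f τ - f t)|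
        ≤ 2 * M * ((t - a) ^ α - δ ^ α) / α := by
      refine le_trans (intervalIntegral.abs_integral_le_integral_abs h1) ?_
      have hmono : (∫ τ in a..(t - δ), |(t - τ) ^ (α - 1) * (f τ - f t)|)
          ≤ ∫ τ in a..(t - δ), (t - τ) ^ (α - 1) * (2 * M) := by
        refine intervalIntegral.integral_mono_on h1 hI1int.abs (hint_M.mono_set hsub1) ?_
        intro τ hτ
        have hτt : (0:ℝ) ≤ t - τ := by linarith [hτ.2]
        rw [abs_mul, abs_of_nonneg (Real.rpow_nonneg hτt _)]
        refine mul_le_mul_of_nonneg_left ?_ (Real.rpow_nonneg hτt _)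
        have := hM τ ⟨hτ.1, by linarith [hτ.2]⟩
        linarith
      refine le_trans hmono (le_of_eq ?_)
      rw [intervalIntegral.integral_mul_const, rpow_int_eq hα]
      rw [show t - (t - δ) = δ by ring]
      ring
    -- bound on the near part
    have hbound2 : |∫ τ in (t - δ)..t, (t - τ) ^ (α - 1) * (f τ - f t)|
        ≤ ε / 3 * δ ^ α / α := by
      refine le_trans (intervalIntegral.abs_integral_le_integral_abs h2) ?_
      have hint_e : IntervalIntegrable (fun τ => (t - τ) ^ (α - 1) * (ε / 3)) volume (t - δ) t :=
        (integrable_aux hα _ continuousOn_const).mono_set hsub2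
      have hmono : (∫ τ in (t - δ)..t, |(t - τ) ^ (α - 1) * (f τ - f t)|)
          ≤ ∫ τ in (t - δ)..t, (t - τ) ^ (α - 1) * (ε / 3) := by
        refine intervalIntegral.integral_mono_on h2 hI2int.abs hint_e ?_
        intro τ hτ
        have hτt : (0:ℝ) ≤ t - τ := by linarith [hτ.2]
        rw [abs_mul, abs_of_nonneg (Real.rpow_nonneg hτt _)]
        exact mul_le_mul_of_nonneg_left (hnear τ hτ) (Real.rpow_nonneg hτt _)
      refine le_trans hmono (le_of_eq ?_)
      rw [intervalIntegral.integral_mul_const, rpow_int_eq hα]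
      rw [show t - (t - δ) = δ by ring, sub_self, Real.zero_rpow hα.ne', sub_zero]
      ring
    have heq : fracInt a α f t - f t
        = (1 / Real.Gamma α) * ((∫ τ in a..(t - δ), (t - τ) ^ (α - 1) * (f τ - f t))
            + (∫ τ in (t - δ)..t, (t - τ) ^ (α - 1) * (f τ - f t)))
          + f t * ((t - a) ^ α / Real.Gamma (α + 1) - 1) := by
      unfold fracInt
      rw [hsplit, hconst, hIadd, hG1]
      field_simp
      ring
    rw [heq]
    simp only [hBdef]
    refine le_trans (abs_add_le _ _) ?_
    have hterm2 : |f t * ((t - a) ^ α / Real.Gamma (α + 1) - 1)|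
        = |f t| * |(t - a) ^ α / Real.Gamma (α + 1) - 1| := abs_mul _ _
    rw [hterm2]
    refine add_le_add ?_ le_rfl
    calc |1 / Real.Gamma α * ((∫ τ in a..(t - δ), (t - τ) ^ (α - 1) * (f τ - f t))
            + (∫ τ in (t - δ)..t, (t - τ) ^ (α - 1) * (f τ - f t)))|
        = 1 / Real.Gamma α * |(∫ τ in a..(t - δ), (t - τ) ^ (α - 1) * (f τ - f t))
            + (∫ τ in (t - δ)..t, (t - τ) ^ (α - 1) * (f τ - f t))| := by
          rw [abs_mul, abs_of_nonneg (by positivity)]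
      _ ≤ 1 / Real.Gamma α * (2 * M * ((t - a) ^ α - δ ^ α) / α + ε / 3 * δ ^ α / α) := by
          refine mul_le_mul_of_nonneg_left ?_ (by positivity)
          exact le_trans (abs_add_le _ _) (add_le_add hbound1 hbound2)
      _ = (2 * M * ((t - a) ^ α - δ ^ α) + ε / 3 * δ ^ α) / Real.Gamma (α + 1) := by
          rw [hG1]; field_simp
  filter_upwards [hineq, hBev] with α h1 h2
  rw [Real.dist_eq]
  exact lt_of_le_of_lt h1 h2
end
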